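/- Let μ ∈ [0, 1/2], m₀ = √(2(1−μ)) and θ̄ ∈ ℝ. Define α_h(τ) = 2 arctan(tanh(m₀τ/4)) and θ_h(τ) = θ̄ + π + 2α_h(τ) for τ ∈ ℝ. Then (θ_h, α_h) is a solution of the system θ' = m₀ cos α, α' = (m₀/2) cos α on all of ℝ, and it is a heteroclinic orbit between the two circles of equilibria: α_h(τ) → −π/2 and θ_h(τ) → θ̄ as τ → −∞, while α_h(τ) → π/2 and θ_h(τ) → θ̄ + 2π (i.e. θ̄ modulo 2π) as τ → +∞. -/

import Mathlib

open Real Filter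
open scoped Topology

/-- The `α`-component of the heteroclinic orbit inside the collision manifold. -/
noncomputable def alphaHet (m0 τ : ℝ) : ℝ := 2 * Real.arctan (Real.tanh (m0 * τ / 4))

/-- The `θ`-component of the heteroclinic orbit inside the collision manifold. -/
noncomputable def thetaHet (θb m0 τ : ℝ) : ℝ := θb + π + 2 * alphaHet m0 τ

/-! With `t = tanh u` one has `tanh' u = 1 - t²` and `cos (2 arctan t) = (1 - t²) / (1 + t²)`, so
`g u = 2 arctan (tanh u)` solves `g' = 2 cos g`; the substitution `u = m₀ τ / 4` turns this into the
`α`-equation, and `θ_h - 2 α_h` is constant. Since `tanh u → ±1` as `u → ±∞`, `g → ±π/2`. -/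

namespace Real

theorem hasDerivAt_tanh (x : ℝ) : HasDerivAt tanh (1 - tanh x ^ 2) x := by
  have h := (hasDerivAt_sinh x).div (hasDerivAt_cosh x) (cosh_pos x).ne'
  rw [show tanh = sinh / cosh from funext tanh_eq_sinh_div_cosh]
  refine h.congr_deriv ?_
  rw [Pi.div_apply]
  field_simp

theorem tanh_eq_one_sub_exp_div_one_add_exp (x : ℝ) :
    tanh x = (1 - exp (-(2 * x))) / (1 + exp (-(2 * x))) := by
  rw [tanh_eq_sinh_div_cosh, sinh_eq, cosh_eq, two_mul, neg_add, exp_add, exp_neg]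
  field_simp

theorem tendsto_tanh_atTop : Tendsto tanh atTop (𝓝 1) := by
  have hexp : Tendsto (fun x => exp (-(2 * x))) atTop (𝓝 0) :=
    tendsto_exp_atBot.comp (tendsto_neg_atTop_atBot.comp (tendsto_id.const_mul_atTop two_pos))
  have h := (tendsto_const_nhds (x := (1 : ℝ)).sub hexp).div
    (tendsto_const_nhds (x := (1 : ℝ)).add hexp) (by norm_num)
  rw [sub_zero, add_zero, div_one] at h
  exact h.congr fun x => (tanh_eq_one_sub_exp_div_one_add_exp x).symm

theorem tendsto_tanh_atBot : Tendsto tanh atBot (𝓝 (-1)) :=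
  (tendsto_tanh_atTop.comp tendsto_neg_atBot_atTop).neg.congr fun x => by simp [tanh_neg]

theorem cos_two_mul_arctan (t : ℝ) : cos (2 * arctan t) = (1 - t ^ 2) / (1 + t ^ 2) := by
  rw [cos_two_mul, cos_sq_arctan]
  field_simp
  ring

end Real

theorem hasDerivAt_two_mul_arctan_tanh (x : ℝ) :
    HasDerivAt (fun x => 2 * arctan (tanh x)) (2 * cos (2 * arctan (tanh x))) x := by
  refine (((hasDerivAt_arctan _).comp x (hasDerivAt_tanh x)).const_mul 2).congr_deriv ?_
  rw [cos_two_mul_arctan]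
  ring

theorem tendsto_two_mul_arctan_tanh_atTop :
    Tendsto (fun x => 2 * arctan (tanh x)) atTop (𝓝 (π / 2)) := by
  have h := ((continuous_arctan.tendsto 1).comp tendsto_tanh_atTop).const_mul 2
  rwa [arctan_one, show 2 * (π / 4) = π / 2 by ring] at h

theorem tendsto_two_mul_arctan_tanh_atBot :
    Tendsto (fun x => 2 * arctan (tanh x)) atBot (𝓝 (-(π / 2))) := by
  have h := ((continuous_arctan.tendsto (-1)).comp tendsto_tanh_atBot).const_mul 2
  rwa [arctan_neg, arctan_one, show 2 * -(π / 4) = -(π / 2) by ring] at h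

theorem hasDerivAt_alphaHet (m0 τ : ℝ) :
    HasDerivAt (alphaHet m0) (m0 / 2 * cos (alphaHet m0 τ)) τ := by
  have hlin : HasDerivAt (fun τ => m0 * τ / 4) (m0 / 4) τ := by
    simpa using ((hasDerivAt_id τ).const_mul m0).div_const 4
  refine ((hasDerivAt_two_mul_arctan_tanh _).comp τ hlin).congr_deriv ?_
  rw [alphaHet]
  ring

theorem hasDerivAt_thetaHet (θb m0 τ : ℝ) :
    HasDerivAt (thetaHet θb m0) (m0 * cos (alphaHet m0 τ)) τ :=
  (((hasDerivAt_alphaHet m0 τ).const_mul 2).const_add (θb + π)).congr_deriv (by ring)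

theorem tendsto_alphaHet_atTop {m0 : ℝ} (hm0 : 0 < m0) :
    Tendsto (alphaHet m0) atTop (𝓝 (π / 2)) :=
  tendsto_two_mul_arctan_tanh_atTop.comp
    ((tendsto_id.const_mul_atTop hm0).atTop_div_const (by norm_num))

theorem tendsto_alphaHet_atBot {m0 : ℝ} (hm0 : 0 < m0) :
    Tendsto (alphaHet m0) atBot (𝓝 (-(π / 2))) :=
  tendsto_two_mul_arctan_tanh_atBot.comp
    ((tendsto_id.const_mul_atBot hm0).atBot_div_const (by norm_num))

theorem Filter.Tendsto.thetaHet {l : Filter ℝ} {θb m0 a : ℝ}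
    (h : Tendsto (alphaHet m0) l (𝓝 a)) :
    Tendsto (thetaHet θb m0) l (𝓝 (θb + π + 2 * a)) :=
  (h.const_mul 2).const_add (θb + π)

/-- For `μ ∈ [0,1/2]`, `m₀ = √(2(1-μ))` and any `θ̄`, the curve
`(θ_h, α_h)(τ) = (θ̄ + π + 2α_h(τ), 2 arctan(tanh(m₀τ/4)))` solves
`θ' = m₀ cos α`, `α' = (m₀/2) cos α` on all of `ℝ`, and is heteroclinic between the
two circles of equilibria: `α_h → ∓π/2` and `θ_h → θ̄` (resp. `θ̄ + 2π`) as `τ → ∓∞`. -/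
theorem heteroclinic_inside_collision_manifold
    (μ : ℝ) (hμ : μ ∈ Set.Icc (0 : ℝ) (1 / 2)) (θb : ℝ) :
    (∀ τ : ℝ, HasDerivAt (thetaHet θb (Real.sqrt (2 * (1 - μ))))
      (Real.sqrt (2 * (1 - μ)) * Real.cos (alphaHet (Real.sqrt (2 * (1 - μ))) τ)) τ) ∧
    (∀ τ : ℝ, HasDerivAt (alphaHet (Real.sqrt (2 * (1 - μ))))
      (Real.sqrt (2 * (1 - μ)) / 2 * Real.cos (alphaHet (Real.sqrt (2 * (1 - μ))) τ)) τ) ∧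
    Tendsto (alphaHet (Real.sqrt (2 * (1 - μ)))) atBot (𝓝 (-(π / 2))) ∧
    Tendsto (thetaHet θb (Real.sqrt (2 * (1 - μ)))) atBot (𝓝 θb) ∧
    Tendsto (alphaHet (Real.sqrt (2 * (1 - μ)))) atTop (𝓝 (π / 2)) ∧
    Tendsto (thetaHet θb (Real.sqrt (2 * (1 - μ)))) atTop (𝓝 (θb + 2 * π)) := by
  have hm0 : 0 < √(2 * (1 - μ)) := sqrt_pos.mpr (by linarith [hμ.2])
  refine ⟨hasDerivAt_thetaHet θb _, hasDerivAt_alphaHet _, tendsto_alphaHet_atBot hm0, ?_,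
    tendsto_alphaHet_atTop hm0, ?_⟩
  · convert (tendsto_alphaHet_atBot hm0).thetaHet using 2
    ring
  · convert (tendsto_alphaHet_atTop hm0).thetaHet using 2
    ring
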